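/- Let a be a positive integer, q = 5^a, let K be a complete nonarchimedean valued field extension of ℚ_5 with valuation ord_5 (ord_5(5) = 1) and ord_q := (1/a)·ord_5, and let A = (A_{ij})_{i,j≥1} be a matrix with entries in K such that ord_5(A_{ij}) > 5a/12 + (i−j)/8 for all i, j ≥ 1, and such that for n = 1, 2, 3 the series C_n := ∑_{u_1<u_2<⋯<u_n} ∑_{σ ∈ S_n} sgn(σ) ∏_{i=1}^n A_{u_i, u_{σ(i)}} converge in K. Then ord_q(C_1) > 5/12, ord_q(C_2) > 2·5/12 = 5/6, and ord_q(C_3) > 3·5/12 = 5/4. -/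
import Mathlib


/-!
STATEMENT 17: Let `q = 5^a`, `K` a complete nonarchimedean valued field extension of
`ℚ_5` with valuation `ord_5` (`ord_5 5 = 1`) and `ord_q = (1/a)·ord_5`, and let
`A = (A_{ij})_{i,j≥1}` have entries in `K` with `ord_5 A_{ij} > 5a/12 + (i−j)/8`.
Assume for `n = 1, 2, 3` that the Fredholm coefficients
`C_n = ∑_{u₁<⋯<u_n} ∑_{σ∈S_n} sgn(σ) ∏ᵢ A_{uᵢ,u_{σ(i)}}` converge in `K`
(convergence expressed via the valuation: `ord_5 (C_n − partial sums) → +∞`, partial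
sums being over strictly increasing tuples `u : Fin n → [1, N]`).  Then
`ord_q C₁ > 5/12`, `ord_q C₂ > 2·5/12 = 5/6` and `ord_q C₃ > 3·5/12 = 5/4`.
-/

open scoped BigOperators

local instance fact5 : Fact (Nat.Prime 5) := ⟨by norm_num⟩

/-- Partial sum (over strictly increasing tuples with entries in `[1, N]`) of the
`n`-th Fredholm coefficient `C_n = ∑_{u₁<⋯<u_n} ∑_{σ∈S_n} sgn(σ) ∏ᵢ A_{uᵢ,u_{σ(i)}}`
of the infinite matrix `A`. -/
def fredholmPartial {K : Type*} [CommRing K] (A : ℕ → ℕ → K) (n N : ℕ) : K :=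
  ∑ u ∈ (Fintype.piFinset fun _ : Fin n => Finset.Icc 1 N).filter
      (fun u => ∀ s t : Fin n, s < t → u s < u t),
    ∑ σ : Equiv.Perm (Fin n), ((Equiv.Perm.sign σ : ℤ) : K) * ∏ i, A (u i) (u (σ i))


-- strict sum inequality in WithTop ℝ
lemma wt_add_lt (r s : ℝ) (x y : WithTop ℝ) (hx : (r : WithTop ℝ) < x)
    (hy : (s : WithTop ℝ) < y) : ((r + s : ℝ) : WithTop ℝ) < x + y := by
  cases x with
  | top => simp [WithTop.top_add]
  | coe t =>
    cases y with
    | top => simp [WithTop.add_top]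
    | coe u =>
      rw [← WithTop.coe_add, WithTop.coe_lt_coe] at *
      exact add_lt_add hx hy

lemma wt_sum_lt {ι : Type*} (s : Finset ι) (hs : s.Nonempty) (r : ι → ℝ)
    (f : ι → WithTop ℝ) (h : ∀ i ∈ s, (r i : WithTop ℝ) < f i) :
    ((∑ i ∈ s, r i : ℝ) : WithTop ℝ) < ∑ i ∈ s, f i := by
  induction s using Finset.cons_induction with
  | empty => exact absurd hs (by simp)
  | cons i s hi ih =>
    rw [Finset.sum_cons, Finset.sum_cons]
    rcases s.eq_empty_or_nonempty with rfl | hs'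
    · simpa using h i (by simp)
    · exact wt_add_lt _ _ _ _ (h i (by simp)) (ih hs' fun j hj => h j (by simp [hj]))

theorem fredholm_coeff_bounds_five
    (K : Type*) [Field K] [Algebra ℚ_[5] K]
    (v : K → WithTop ℝ)
    (hv0 : ∀ x, v x = ⊤ ↔ x = 0)
    (hv_mul : ∀ x y, v (x * y) = v x + v y)
    (hv_add : ∀ x y, min (v x) (v y) ≤ v (x + y))
    (hv5 : v (5 : K) = 1)
    (a : ℕ) (ha : 0 < a)
    (A : ℕ → ℕ → K)
    (hA : ∀ i j : ℕ, 1 ≤ i → 1 ≤ j →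
      ((5 * (a : ℝ) / 12 + ((i : ℝ) - (j : ℝ)) / 8 : ℝ) : WithTop ℝ) < v (A i j))
    (C : ℕ → K)
    (hC : ∀ n, 1 ≤ n → n ≤ 3 → ∀ Cb : ℝ, ∃ N₀ : ℕ, ∀ N ≥ N₀,
      (Cb : WithTop ℝ) < v (C n - fredholmPartial A n N)) :
    ((5 / 12 : ℝ) : WithTop ℝ) < WithTop.map (fun t => t / (a : ℝ)) (v (C 1)) ∧
    ((5 / 6 : ℝ) : WithTop ℝ) < WithTop.map (fun t => t / (a : ℝ)) (v (C 2)) ∧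
    ((5 / 4 : ℝ) : WithTop ℝ) < WithTop.map (fun t => t / (a : ℝ)) (v (C 3)) := by
  -- v 1 = 0
  have hv1 : v 1 = 0 := by
    have h := hv_mul 1 1
    rw [mul_one] at h
    cases hv : v (1 : K) with
    | top => exact absurd ((hv0 1).1 hv) one_ne_zero
    | coe t =>
      rw [hv, ← WithTop.coe_add, WithTop.coe_eq_coe] at h
      have : t = 0 := by linarith
      simp [hv, this]
  -- v (-1) = 0
  have hvneg1 : v (-1 : K) = 0 := by
    have h := hv_mul (-1) (-1)
    rw [neg_mul_neg, one_mul, hv1] at h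
    cases hv : v (-1 : K) with
    | top => rw [hv] at h; simp at h
    | coe t =>
      rw [hv, ← WithTop.coe_add, ← WithTop.coe_zero, WithTop.coe_eq_coe] at h
      have : t = 0 := by linarith
      simp [hv, this]
  -- v of products
  have hv_prod : ∀ (n : ℕ) (f : Fin n → K), v (∏ i, f i) = ∑ i, v (f i) := by
    intro n f
    classical
    induction (Finset.univ : Finset (Fin n)) using Finset.cons_induction with
    | empty => simpa using hv1
    | cons i s hi ih => rw [Finset.prod_cons, Finset.sum_cons, hv_mul, ih]
  -- min ≤ v of finite sums (strict bound version)
  have hv_sum : ∀ {ι : Type} (s : Finset ι) (f : ι → K) (B : ℝ),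
      (∀ i ∈ s, (B : WithTop ℝ) < v (f i)) → (B : WithTop ℝ) < v (∑ i ∈ s, f i) := by
    intro ι s f B h
    classical
    induction s using Finset.cons_induction with
    | empty => simp only [Finset.sum_empty]; rw [(hv0 0).2 rfl]; exact WithTop.coe_lt_top _
    | cons i s hi ih =>
      rw [Finset.sum_cons]
      refine lt_of_lt_of_le ?_ (hv_add _ _)
      exact lt_min (h i (by simp)) (ih fun j hj => h j (by simp [hj]))
  -- key bound on partial sums
  have hpartial : ∀ n N : ℕ, 1 ≤ n →
      (((n : ℝ) * (5 * (a : ℝ) / 12) : ℝ) : WithTop ℝ) < v (fredholmPartial A n N) := by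
    intro n N hn
    unfold fredholmPartial
    refine hv_sum _ _ _ ?_
    intro u hu
    simp only [Finset.mem_filter, Fintype.mem_piFinset, Finset.mem_Icc] at hu
    refine hv_sum _ _ _ ?_
    intro σ _
    rw [hv_mul, hv_prod]
    have hsign : v (((Equiv.Perm.sign σ : ℤ) : K)) = 0 := by
      rcases Int.units_eq_one_or (Equiv.Perm.sign σ) with h | h <;> rw [h] <;>
        push_cast <;> simp [hv1, hvneg1]
    rw [hsign, zero_add]
    have hne : (Finset.univ : Finset (Fin n)).Nonempty := by
      simpa [Finset.univ_nonempty_iff] using Fin.pos_iff_nonempty.1 hn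
    have hterm : ∀ i ∈ (Finset.univ : Finset (Fin n)),
        ((5 * (a : ℝ) / 12 + ((u i : ℝ) - (u (σ i) : ℝ)) / 8 : ℝ) : WithTop ℝ)
          < v (A (u i) (u (σ i))) := fun i _ =>
      hA _ _ (hu.1 i).1 (hu.1 (σ i)).1
    have := wt_sum_lt Finset.univ hne _ _ hterm
    have hsum : ∑ i : Fin n, (5 * (a : ℝ) / 12 + ((u i : ℝ) - (u (σ i) : ℝ)) / 8)
        = (n : ℝ) * (5 * (a : ℝ) / 12) := by
      rw [Finset.sum_add_distrib]
      have hperm : ∑ i : Fin n, ((u (σ i) : ℝ)) = ∑ i : Fin n, ((u i : ℝ)) :=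
        Equiv.sum_comp σ (fun j => (u j : ℝ))
      simp only [sub_div, Finset.sum_sub_distrib, ← Finset.sum_div, hperm]
      simp [Finset.sum_const]
      ring
    rwa [hsum] at this
  -- key bound on C n
  have hkey : ∀ n : ℕ, 1 ≤ n → n ≤ 3 →
      (((n : ℝ) * (5 * (a : ℝ) / 12) : ℝ) : WithTop ℝ) < v (C n) := by
    intro n h1 h3
    obtain ⟨N₀, hN₀⟩ := hC n h1 h3 ((n : ℝ) * (5 * (a : ℝ) / 12))
    have hdiff := hN₀ N₀ le_rfl
    have hpar := hpartial n N₀ h1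
    have heq : C n = fredholmPartial A n N₀ + (C n - fredholmPartial A n N₀) := by ring
    rw [heq]
    exact lt_of_lt_of_le (lt_min hpar hdiff) (hv_add _ _)
  -- conclude
  have hfin : ∀ (n : ℕ) (c : ℝ), 1 ≤ n → n ≤ 3 → c * (a : ℝ) = (n : ℝ) * (5 * (a : ℝ) / 12) →
      ((c : ℝ) : WithTop ℝ) < WithTop.map (fun t => t / (a : ℝ)) (v (C n)) := by
    intro n c h1 h3 hc
    have := hkey n h1 h3
    cases hv : v (C n) with
    | top => simp [WithTop.map_top]
    | coe t =>
      rw [hv, WithTop.coe_lt_coe] at this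
      simp only [WithTop.map_coe, WithTop.coe_lt_coe]
      rw [lt_div_iff₀ (by exact_mod_cast ha : (0:ℝ) < (a:ℝ))]
      linarith [hc]
  refine ⟨?_, ?_, ?_⟩
  · refine hfin 1 (5/12) le_rfl (by norm_num) ?_; push_cast; ring
  · refine hfin 2 (5/6) (by norm_num) (by norm_num) ?_; push_cast; ring
  · refine hfin 3 (5/4) (by norm_num) (by norm_num) ?_; push_cast; ring
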